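/- Let {A_n}_{n≥1} be a sequence of d×d real matrices with all entries strictly positive, and for each n let m_n and M_n denote the smallest and the largest entry of A_n, respectively. If ∑_{n=1}^∞ m_n/M_n = ∞, then τ(A_m A_{m+1} ⋯ A_n) → 0 as n → ∞, for every m ≥ 1. -/

import Mathlib

open Filter

/-- The Hilbert projective metric on strictly positive vectors in `ℝ^d`. -/
noncomputable def hilbertDist {d : ℕ} (x y : Fin d → ℝ) : ℝ :=
  Real.log (⨆ i : Fin d, ⨆ j : Fin d, (x i * y j) / (x j * y i))

/-- The Birkhoff contraction coefficient. -/
noncomputable def birkhoffCoeff {d : ℕ} (A : Matrix (Fin d) (Fin d) ℝ) : ℝ :=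
  sSup {t : ℝ | ∃ x y : Fin d → ℝ, (∀ i, 0 < x i) ∧ (∀ i, 0 < y i) ∧
    0 < hilbertDist x y ∧ t = hilbertDist (A.mulVec x) (A.mulVec y) / hilbertDist x y}

/-- The forward product `P_m^n = A_m A_{m+1} ⋯ A_n`. -/
def fwdProd {d : ℕ} (A : ℕ → Matrix (Fin d) (Fin d) ℝ) (m n : ℕ) :
    Matrix (Fin d) (Fin d) ℝ :=
  ((List.range' m (n + 1 - m)).map A).prod

/-- The smallest entry of a matrix. -/
noncomputable def minEntry {d : ℕ} (A : Matrix (Fin d) (Fin d) ℝ) : ℝ :=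
  ⨅ p : Fin d × Fin d, A p.1 p.2

/-- The largest entry of a matrix. -/
noncomputable def maxEntry {d : ℕ} (A : Matrix (Fin d) (Fin d) ℝ) : ℝ :=
  ⨆ p : Fin d × Fin d, A p.1 p.2

/-!
Let `α ≤ β` be the extreme values of `x / y`. Then `u = x - α y` and `v = β y - x` are
nonnegative and, up to the common factor `β - α`, `x = β u + α v` and `y = u + v`. So
`(B x)_i / (B y)_i = (β p_i + α q_i) / (p_i + q_i)` with `p = B u`, `q = B v`, which increases
with `p_i / q_i`. If the entries of `B` lie in `[m, M]`, every `p_i / q_i` lies in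
`[ρ m / M, ρ M / m]` with `ρ = ∑ u / ∑ v`; maximizing the resulting cross ratio over `ρ` gives
Birkhoff's bound `D(B x, B y) ≤ (M - m) / (M + m) · D(x, y)`. This factor is at most
`1 - m / M ≤ exp (-m / M)`, so `A_m ⋯ A_n` contracts `D` by at least `exp (-∑ m_k / M_k)`.
-/

open Matrix

lemma log_div_le_mul_log {m M s : ℝ} (hm : 0 < m) (hmM : m ≤ M) (hs : 1 ≤ s) :
    Real.log ((s * M + m) / (M + m * s)) ≤ (M - m) / (M + m) * Real.log s := by
  have hM : 0 < M := hm.trans_le hmM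
  let g : ℝ → ℝ := fun t =>
    (M - m) / (M + m) * Real.log t - Real.log (t * M + m) + Real.log (M + m * t)
  let g' : ℝ → ℝ := fun t => (M - m) / (M + m) / t - M / (t * M + m) + m / (M + m * t)
  have hg : ∀ t, 0 < t → HasDerivAt g (g' t) t := by
    intro t ht
    have h₁ := ((hasDerivAt_id t).mul_const M).add_const m |>.log (by positivity)
    have h₂ := ((hasDerivAt_id t).const_mul m).const_add M |>.log (by positivity)
    have h₀ := (Real.hasDerivAt_log ht.ne').const_mul ((M - m) / (M + m))
    refine (h₀.sub h₁ |>.add h₂).congr_deriv ?_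
    simp only [g', id, div_eq_mul_inv, mul_one, one_mul]
  have hg' : ∀ t, 0 < t → 0 ≤ g' t := by
    intro t ht
    have key :
        g' t = (M - m) * m * M * (t - 1) ^ 2 / ((M + m) * t * (t * M + m) * (M + m * t)) := by
      simp only [g']
      field_simp
      ring
    rw [key]
    have : 0 ≤ M - m := sub_nonneg.2 hmM
    positivity
  have hmono : MonotoneOn g (Set.Ici 1) := by
    refine monotoneOn_of_hasDerivWithinAt_nonneg (convex_Ici 1)
      (fun t ht => (hg t (zero_lt_one.trans_le ht)).continuousAt.continuousWithinAt)
      (fun t ht => (hg t ?_).hasDerivWithinAt) (fun t ht => hg' t ?_) <;>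
    · rw [interior_Ici] at ht
      exact zero_lt_one.trans ht
  have h := hmono (Set.mem_Ici.2 le_rfl) (Set.mem_Ici.2 hs) hs
  simp only [g, Real.log_one, one_mul, mul_one, mul_zero, zero_sub] at h
  rw [Real.log_div (by positivity) (by positivity)]
  linarith

lemma sub_div_add_le_exp_neg_div {m M : ℝ} (hm : 0 ≤ m) (hmM : m ≤ M) :
    (M - m) / (M + m) ≤ Real.exp (-(m / M)) := by
  calc (M - m) / (M + m) ≤ 1 - m / M := by
        rcases hmM.eq_or_lt' with rfl | hlt
        · simpa using div_self_le_one M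
        · have hM : 0 < M := hm.trans_lt hlt
          rw [one_sub_div hM.ne']
          exact div_le_div_of_nonneg_left (by linarith) hM (by linarith)
    _ ≤ Real.exp (-(m / M)) := by linarith [Real.add_one_le_exp (-(m / M))]

lemma sq_mul_add_mul_add_le {s p q p' q' : ℝ} (hs : 1 ≤ s) (h : p * q' ≤ p' * q) :
    (s ^ 2 * p + q) * (p' + q') ≤ (s ^ 2 * p' + q') * (p + q) := by
  have : 0 ≤ (s ^ 2 - 1) * (p' * q - p * q') := mul_nonneg (by nlinarith) (by linarith)
  linear_combination this

/-- Equality holds at `s U = V`. -/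
lemma extreme_cross_ratio_le {m M s U V : ℝ} (hm : 0 ≤ m) (hmM : m ≤ M) (hs : 1 ≤ s) :
    (s ^ 2 * (M * U) + m * V) * (m * U + M * V) * (M + m * s) ^ 2
      ≤ (s * M + m) ^ 2 * (M * U + m * V) * (s ^ 2 * (m * U) + M * V) := by
  have : 0 ≤ (s ^ 2 - 1) * m * M * (M ^ 2 - m ^ 2) * (s * U - V) ^ 2 := by
    have : 0 ≤ s ^ 2 - 1 := by nlinarith
    have : 0 ≤ M ^ 2 - m ^ 2 := by nlinarith
    have : 0 ≤ M := hm.trans hmM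
    positivity
  linear_combination this

lemma cross_ratio_le_of_mem_Icc {ι : Type*} {m M s U V : ℝ} {p q : ι → ℝ} (hm : 0 < m)
    (hmM : m ≤ M) (hs : 1 ≤ s) (hU : 0 ≤ U) (hV : 0 ≤ V) (hUV : 0 < U + V)
    (hp : ∀ k, p k ∈ Set.Icc (m * U) (M * U)) (hq : ∀ k, q k ∈ Set.Icc (m * V) (M * V))
    (i j : ι) :
    (s ^ 2 * p i + q i) * (p j + q j) * (M + m * s) ^ 2
      ≤ (s * M + m) ^ 2 * (s ^ 2 * p j + q j) * (p i + q i) := by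
  obtain ⟨hpi, hpi'⟩ := hp i
  obtain ⟨hpj, hpj'⟩ := hp j
  obtain ⟨hqi, hqi'⟩ := hq i
  obtain ⟨hqj, hqj'⟩ := hq j
  have hM : 0 < M := hm.trans_le hmM
  have hmU : 0 ≤ m * U := mul_nonneg hm.le hU
  have hmV : 0 ≤ m * V := mul_nonneg hm.le hV
  -- row `i` is at worst `(M U, m V)` and row `j` at worst `(m U, M V)`
  have hi : (s ^ 2 * p i + q i) * (M * U + m * V) ≤ (s ^ 2 * (M * U) + m * V) * (p i + q i) :=
    sq_mul_add_mul_add_le hs <| calc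
      p i * (m * V) ≤ M * U * (m * V) := by gcongr
      _ ≤ M * U * q i := by gcongr
  have hj : (s ^ 2 * (m * U) + M * V) * (p j + q j) ≤ (s ^ 2 * p j + q j) * (m * U + M * V) :=
    sq_mul_add_mul_add_le hs <| calc
      m * U * q j ≤ m * U * (M * V) := by gcongr
      _ ≤ p j * (M * V) := by gcongr
  have hb : 0 < (M * U + m * V) * (s ^ 2 * (m * U) + M * V) := by
    have : 0 < M * U + m * V := by nlinarith
    have : 0 < s ^ 2 * (m * U) + M * V := by
      nlinarith [le_mul_of_one_le_left hmU (one_le_pow₀ hs : 1 ≤ s ^ 2)]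
    positivity
  refine le_of_mul_le_mul_right ?_ hb
  calc (s ^ 2 * p i + q i) * (p j + q j) * (M + m * s) ^ 2
        * ((M * U + m * V) * (s ^ 2 * (m * U) + M * V))
      = ((s ^ 2 * p i + q i) * (M * U + m * V))
        * ((s ^ 2 * (m * U) + M * V) * (p j + q j)) * (M + m * s) ^ 2 := by ring
    _ ≤ ((s ^ 2 * (M * U) + m * V) * (p i + q i))
        * ((s ^ 2 * p j + q j) * (m * U + M * V)) * (M + m * s) ^ 2 := by
      have : 0 ≤ (s ^ 2 * (m * U) + M * V) * (p j + q j) :=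
        mul_nonneg (by positivity) (by linarith)
      have : 0 ≤ (s ^ 2 * (M * U) + m * V) * (p i + q i) :=
        mul_nonneg (by positivity) (by linarith)
      gcongr ?_ * ?_ * _
    _ = (s ^ 2 * (M * U) + m * V) * (m * U + M * V) * (M + m * s) ^ 2
        * ((s ^ 2 * p j + q j) * (p i + q i)) := by ring
    _ ≤ (s * M + m) ^ 2 * (M * U + m * V) * (s ^ 2 * (m * U) + M * V)
        * ((s ^ 2 * p j + q j) * (p i + q i)) := by
      have : 0 ≤ s ^ 2 * p j + q j := by nlinarith
      have : 0 ≤ p i + q i := by linarith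
      exact mul_le_mul_of_nonneg_right (extreme_cross_ratio_le hm.le hmM hs) (by positivity)
    _ = (s * M + m) ^ 2 * (s ^ 2 * p j + q j) * (p i + q i)
        * ((M * U + m * V) * (s ^ 2 * (m * U) + M * V)) := by ring

section HilbertMetric

variable {d : ℕ} {x y : Fin d → ℝ}

lemma hilbertDist_of_isEmpty [IsEmpty (Fin d)] : hilbertDist x y = 0 := by
  simp [hilbertDist]

lemma ratio_le_iSup_iSup (i j : Fin d) :
    x i * y j / (x j * y i) ≤ ⨆ i : Fin d, ⨆ j : Fin d, x i * y j / (x j * y i) :=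
  le_ciSup_of_le (Set.finite_range _).bddAbove i
    (le_ciSup (f := fun j => x i * y j / (x j * y i)) (Set.finite_range _).bddAbove j)

lemma log_ratio_le_hilbertDist (hx : ∀ i, 0 < x i) (hy : ∀ i, 0 < y i) (i j : Fin d) :
    Real.log (x i * y j / (x j * y i)) ≤ hilbertDist x y := by
  have := hx i; have := hx j; have := hy i; have := hy j
  exact Real.log_le_log (by positivity) (ratio_le_iSup_iSup i j)

lemma hilbertDist_le_log [Nonempty (Fin d)] {K : ℝ} (hx : ∀ i, 0 < x i) (hy : ∀ i, 0 < y i)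
    (hK : ∀ i j, x i * y j / (x j * y i) ≤ K) : hilbertDist x y ≤ Real.log K := by
  let i : Fin d := Classical.arbitrary _
  have := hx i; have := hy i
  exact Real.log_le_log ((by positivity : 0 < x i * y i / (x i * y i)).trans_le
    (ratio_le_iSup_iSup i i)) (ciSup_le fun i => ciSup_le fun j => hK i j)

lemma hilbertDist_nonneg (hx : ∀ i, 0 < x i) (hy : ∀ i, 0 < y i) : 0 ≤ hilbertDist x y := by
  rcases isEmpty_or_nonempty (Fin d) with _ | ⟨⟨i⟩⟩
  · rw [hilbertDist_of_isEmpty]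
  · simpa [(hx i).ne', (hy i).ne'] using log_ratio_le_hilbertDist hx hy i i

end HilbertMetric

section Contraction

variable {d : ℕ}

def HilbertLipschitzWith (c : ℝ) (B : Matrix (Fin d) (Fin d) ℝ) : Prop :=
  ∀ x y : Fin d → ℝ, (∀ i, 0 < x i) → (∀ i, 0 < y i) →
    hilbertDist (B *ᵥ x) (B *ᵥ y) ≤ c * hilbertDist x y

lemma HilbertLipschitzWith.of_isEmpty [IsEmpty (Fin d)] (c : ℝ) (B : Matrix (Fin d) (Fin d) ℝ) :
    HilbertLipschitzWith c B := fun x y _ _ => by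
  simp [hilbertDist_of_isEmpty]

lemma mulVec_pos_of_pos {B : Matrix (Fin d) (Fin d) ℝ} {x : Fin d → ℝ} (hB : ∀ i j, 0 < B i j)
    (hx : ∀ i, 0 < x i) (i : Fin d) : 0 < (B *ᵥ x) i :=
  Finset.sum_pos (fun k _ => mul_pos (hB i k) (hx k)) ⟨i, Finset.mem_univ i⟩

lemma mul_apply_pos_of_pos {B C : Matrix (Fin d) (Fin d) ℝ} (hB : ∀ i j, 0 < B i j)
    (hC : ∀ i j, 0 < C i j) (i j : Fin d) : 0 < (B * C) i j :=
  Finset.sum_pos (fun k _ => mul_pos (hB i k) (hC k j)) ⟨i, Finset.mem_univ i⟩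

lemma HilbertLipschitzWith.mul {c c' : ℝ} {B C : Matrix (Fin d) (Fin d) ℝ}
    (hB : HilbertLipschitzWith c B) (hC : HilbertLipschitzWith c' C) (hc : 0 ≤ c)
    (hCpos : ∀ i j, 0 < C i j) : HilbertLipschitzWith (c * c') (B * C) := fun x y hx hy => by
  rw [← Matrix.mulVec_mulVec, ← Matrix.mulVec_mulVec, mul_assoc]
  calc hilbertDist (B *ᵥ C *ᵥ x) (B *ᵥ C *ᵥ y) ≤ c * hilbertDist (C *ᵥ x) (C *ᵥ y) :=
        hB _ _ (mulVec_pos_of_pos hCpos hx) (mulVec_pos_of_pos hCpos hy)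
    _ ≤ c * (c' * hilbertDist x y) := by gcongr; exact hC x y hx hy

lemma mulVec_mem_Icc {m M : ℝ} {B : Matrix (Fin d) (Fin d) ℝ} (hB : ∀ i j, B i j ∈ Set.Icc m M)
    {u : Fin d → ℝ} (hu : ∀ k, 0 ≤ u k) (i : Fin d) :
    (B *ᵥ u) i ∈ Set.Icc (m * ∑ k, u k) (M * ∑ k, u k) := by
  simp only [Matrix.mulVec, dotProduct, Finset.mul_sum, Set.mem_Icc]
  exact ⟨Finset.sum_le_sum fun k _ => mul_le_mul_of_nonneg_right (hB i k).1 (hu k),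
    Finset.sum_le_sum fun k _ => mul_le_mul_of_nonneg_right (hB i k).2 (hu k)⟩

lemma mulVec_cross_ratio_le {m M α s : ℝ} {B : Matrix (Fin d) (Fin d) ℝ} {x y : Fin d → ℝ}
    (hm : 0 < m) (hB : ∀ i j, B i j ∈ Set.Icc m M) (hy : ∀ k, 0 < y k) (hα : 0 < α) (hs : 1 ≤ s)
    (hlow : ∀ k, α * y k ≤ x k) (hup : ∀ k, x k ≤ α * s ^ 2 * y k) (i j : Fin d) :
    (B *ᵥ x) i * (B *ᵥ y) j * (M + m * s) ^ 2 ≤ (s * M + m) ^ 2 * ((B *ᵥ x) j * (B *ᵥ y) i) := by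
  rcases hs.eq_or_lt with rfl | hs
  · have hxy : x = α • y := funext fun k => le_antisymm (by simpa using hup k) (hlow k)
    simp only [hxy, mulVec_smul, Pi.smul_apply, smul_eq_mul]
    exact le_of_eq (by ring)
  set u := x - α • y
  set v := (α * s ^ 2) • y - x
  set c := α * (s ^ 2 - 1)
  have hu : ∀ k, 0 ≤ u k := fun k => by simpa [u] using hlow k
  have hv : ∀ k, 0 ≤ v k := fun k => by simpa [v] using hup k
  have hBx : ∀ k, c * (B *ᵥ x) k = α * (s ^ 2 * (B *ᵥ u) k + (B *ᵥ v) k) := fun k => by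
    simp only [u, v, c, mulVec_sub, mulVec_smul, Pi.sub_apply, Pi.smul_apply, smul_eq_mul]
    ring
  have hBy : ∀ k, c * (B *ᵥ y) k = (B *ᵥ u) k + (B *ᵥ v) k := fun k => by
    simp only [u, v, c, mulVec_sub, mulVec_smul, Pi.sub_apply, Pi.smul_apply, smul_eq_mul]
    ring
  have hc : 0 < c := mul_pos hα (by nlinarith)
  have hUV : 0 < ∑ k, u k + ∑ k, v k := by
    rw [← Finset.sum_add_distrib]
    have : ∀ k, u k + v k = c * y k := fun k => by
      simp only [u, v, c, Pi.sub_apply, Pi.smul_apply, smul_eq_mul]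
      ring
    simp only [this, ← Finset.mul_sum]
    exact mul_pos hc (Finset.sum_pos (fun k _ => hy k) ⟨i, Finset.mem_univ i⟩)
  have key := cross_ratio_le_of_mem_Icc hm ((hB i i).1.trans (hB i i).2) hs.le
    (Finset.sum_nonneg fun k _ => hu k) (Finset.sum_nonneg fun k _ => hv k) hUV
    (mulVec_mem_Icc hB hu) (mulVec_mem_Icc hB hv) i j
  refine le_of_mul_le_mul_left ?_ (pow_pos hc 2)
  calc c ^ 2 * ((B *ᵥ x) i * (B *ᵥ y) j * (M + m * s) ^ 2)
      = (c * (B *ᵥ x) i) * (c * (B *ᵥ y) j) * (M + m * s) ^ 2 := by ring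
    _ ≤ (s * M + m) ^ 2 * ((c * (B *ᵥ x) j) * (c * (B *ᵥ y) i)) := by
      rw [hBx, hBx, hBy, hBy]
      linarith [mul_le_mul_of_nonneg_left key hα.le]
    _ = c ^ 2 * ((s * M + m) ^ 2 * ((B *ᵥ x) j * (B *ᵥ y) i)) := by ring

theorem hilbertLipschitzWith_of_mem_Icc {m M : ℝ} {B : Matrix (Fin d) (Fin d) ℝ} (hm : 0 < m)
    (hB : ∀ i j, B i j ∈ Set.Icc m M) : HilbertLipschitzWith ((M - m) / (M + m)) B := by
  rcases isEmpty_or_nonempty (Fin d) with _ | _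
  · exact .of_isEmpty _ B
  intro x y hx hy
  obtain ⟨i₀, hi₀⟩ := Finite.exists_max fun k => x k / y k
  obtain ⟨j₀, hj₀⟩ := Finite.exists_min fun k => x k / y k
  set α := x j₀ / y j₀
  have hα : 0 < α := div_pos (hx j₀) (hy j₀)
  have hmM : m ≤ M := (hB i₀ i₀).1.trans (hB i₀ i₀).2
  have hM : 0 < M := hm.trans_le hmM
  have hBpos : ∀ i j, 0 < B i j := fun i j => hm.trans_le (hB i j).1
  set t := x i₀ / y i₀ / α
  set s := √t
  have ht : 1 ≤ t := (one_le_div hα).2 (hj₀ i₀)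
  have hs : 1 ≤ s := Real.one_le_sqrt.2 ht
  have hK : ∀ i j, (B *ᵥ x) i * (B *ᵥ y) j / ((B *ᵥ x) j * (B *ᵥ y) i)
      ≤ ((s * M + m) / (M + m * s)) ^ 2 := by
    intro i j
    have := mulVec_pos_of_pos hBpos hx j; have := mulVec_pos_of_pos hBpos hy i
    rw [div_pow, div_le_div_iff₀ (by positivity) (by positivity)]
    refine mulVec_cross_ratio_le hm hB hy hα hs (fun k => ?_) (fun k => ?_) i j
    · exact (le_div_iff₀ (hy k)).1 (hj₀ k)
    · rw [Real.sq_sqrt (zero_le_one.trans ht), mul_div_cancel₀ _ hα.ne']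
      exact (div_le_iff₀ (hy k)).1 (hi₀ k)
  have htxy : t = x i₀ * y j₀ / (x j₀ * y i₀) := by
    simp only [t, α]
    field_simp [(hy i₀).ne', (hy j₀).ne', (hx j₀).ne']
  calc hilbertDist (B *ᵥ x) (B *ᵥ y)
      ≤ Real.log (((s * M + m) / (M + m * s)) ^ 2) :=
        hilbertDist_le_log (mulVec_pos_of_pos hBpos hx) (mulVec_pos_of_pos hBpos hy) hK
    _ = 2 * Real.log ((s * M + m) / (M + m * s)) := by rw [Real.log_pow]; norm_num
    _ ≤ 2 * ((M - m) / (M + m) * Real.log s) := by gcongr; exact log_div_le_mul_log hm hmM hs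
    _ = (M - m) / (M + m) * Real.log t := by rw [Real.log_sqrt (zero_le_one.trans ht)]; ring
    _ ≤ (M - m) / (M + m) * hilbertDist x y := by
      have : 0 ≤ (M - m) / (M + m) := div_nonneg (by linarith) (by linarith)
      rw [htxy]
      gcongr
      exact log_ratio_le_hilbertDist hx hy i₀ j₀

end Contraction

section Entries

variable {d : ℕ} (B : Matrix (Fin d) (Fin d) ℝ)

lemma minEntry_le (i j : Fin d) : minEntry B ≤ B i j :=
  ciInf_le (f := fun p : Fin d × Fin d => B p.1 p.2) (Set.finite_range _).bddBelow (i, j)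

lemma le_maxEntry (i j : Fin d) : B i j ≤ maxEntry B :=
  le_ciSup (f := fun p : Fin d × Fin d => B p.1 p.2) (Set.finite_range _).bddAbove (i, j)

lemma minEntry_nonneg (hB : ∀ i j, 0 ≤ B i j) : 0 ≤ minEntry B :=
  Real.iInf_nonneg fun p => hB p.1 p.2

lemma minEntry_pos [Nonempty (Fin d)] (hB : ∀ i j, 0 < B i j) : 0 < minEntry B := by
  obtain ⟨p, hp⟩ := Finite.exists_min fun p : Fin d × Fin d => B p.1 p.2
  exact (hB p.1 p.2).trans_le (le_ciInf hp)

lemma minEntry_le_maxEntry : minEntry B ≤ maxEntry B := by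
  rcases isEmpty_or_nonempty (Fin d) with _ | ⟨⟨i⟩⟩
  · simp [minEntry, maxEntry]
  · exact (minEntry_le B i i).trans (le_maxEntry B i i)

lemma hilbertLipschitzWith_minEntry_maxEntry (hB : ∀ i j, 0 < B i j) :
    HilbertLipschitzWith ((maxEntry B - minEntry B) / (maxEntry B + minEntry B)) B := by
  rcases isEmpty_or_nonempty (Fin d) with _ | _
  · exact .of_isEmpty _ B
  · exact hilbertLipschitzWith_of_mem_Icc (minEntry_pos B hB)
      fun i j => ⟨minEntry_le B i j, le_maxEntry B i j⟩

end Entries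

lemma birkhoffCoeff_le {d : ℕ} {c : ℝ} {B : Matrix (Fin d) (Fin d) ℝ} (hc : 0 ≤ c)
    (hB : HilbertLipschitzWith c B) : birkhoffCoeff B ≤ c := by
  refine Real.sSup_le ?_ hc
  rintro t ⟨x, y, hx, hy, hxy, rfl⟩
  exact (div_le_iff₀ hxy).2 (hB x y hx hy)

lemma birkhoffCoeff_nonneg {d : ℕ} {B : Matrix (Fin d) (Fin d) ℝ} (hB : ∀ i j, 0 < B i j) :
    0 ≤ birkhoffCoeff B := by
  refine Real.sSup_nonneg ?_
  rintro t ⟨x, y, hx, hy, hxy, rfl⟩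
  exact div_nonneg (hilbertDist_nonneg (mulVec_pos_of_pos hB hx) (mulVec_pos_of_pos hB hy)) hxy.le

section ForwardProduct

variable {d : ℕ} (A : ℕ → Matrix (Fin d) (Fin d) ℝ)

lemma fwdProd_self (m : ℕ) : fwdProd A m m = A m := by
  simp [fwdProd]

lemma fwdProd_succ {m n : ℕ} (h : m ≤ n + 1) : fwdProd A m (n + 1) = fwdProd A m n * A (n + 1) := by
  rw [fwdProd, fwdProd, show n + 1 + 1 - m = n + 1 - m + 1 by omega, List.range'_concat,
    show m + 1 * (n + 1 - m) = n + 1 by omega]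
  simp

variable {A}

lemma fwdProd_pos (hA : ∀ k i j, 0 < A k i j) {m n : ℕ} (hmn : m ≤ n) :
    ∀ i j, 0 < fwdProd A m n i j := by
  induction n, hmn using Nat.le_induction with
  | base => simpa [fwdProd_self] using hA m
  | succ n hmn ih =>
    rw [fwdProd_succ A (by omega)]
    exact mul_apply_pos_of_pos ih (hA (n + 1))

lemma hilbertLipschitzWith_fwdProd (hA : ∀ k i j, 0 < A k i j) {c : ℕ → ℝ}
    (hc : ∀ k, HilbertLipschitzWith (c k) (A k)) (hc₀ : ∀ k, 0 ≤ c k) {m n : ℕ} (hmn : m ≤ n) :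
    HilbertLipschitzWith (∏ k ∈ Finset.Icc m n, c k) (fwdProd A m n) := by
  induction n, hmn using Nat.le_induction with
  | base => simpa [fwdProd_self] using hc m
  | succ n hmn ih =>
    rw [fwdProd_succ A (by omega), Finset.prod_Icc_succ_top (by omega)]
    exact ih.mul (hc (n + 1)) (Finset.prod_nonneg fun k _ => hc₀ k) (hA (n + 1))

end ForwardProduct

lemma tendsto_sum_Icc_atTop_of_not_summable {f : ℕ → ℝ} (hf : ∀ n, 0 ≤ f n)
    (h : ¬ Summable f) (m : ℕ) : Tendsto (fun n => ∑ k ∈ Finset.Icc m n, f k) atTop atTop := by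
  have hsum := (not_summable_iff_tendsto_nat_atTop_of_nonneg hf).1 h
  refine (tendsto_atTop_add_const_left _ (-∑ k ∈ Finset.range m, f k)
    (hsum.comp (tendsto_add_atTop_nat 1))).congr' ?_
  filter_upwards [eventually_ge_atTop m] with n hn
  rw [Function.comp_apply, ← Finset.sum_range_add_sum_Ico f (by omega : m ≤ n + 1),
    Finset.Ico_add_one_right_eq_Icc]
  ring

/-- If `∑_n m_n/M_n = ∞` (expressed as non-summability of this
nonnegative series), then `τ(A_m ⋯ A_n) → 0` as `n → ∞`, for every `m`. -/
theorem stmt7 {d : ℕ} (A : ℕ → Matrix (Fin d) (Fin d) ℝ)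
    (hA : ∀ k i j, 0 < A k i j)
    (hdiv : ¬ Summable fun n => minEntry (A n) / maxEntry (A n)) :
    ∀ m, Tendsto (fun n => birkhoffCoeff (fwdProd A m n)) atTop (nhds 0) := by
  intro m
  set θ := fun n => minEntry (A n) / maxEntry (A n)
  set τ := fun n => (maxEntry (A n) - minEntry (A n)) / (maxEntry (A n) + minEntry (A n))
  have hmin : ∀ k, 0 ≤ minEntry (A k) := fun k => minEntry_nonneg _ fun i j => (hA k i j).le
  have hmax : ∀ k, minEntry (A k) ≤ maxEntry (A k) := fun k => minEntry_le_maxEntry _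
  have hτ₀ : ∀ k, 0 ≤ τ k := fun k =>
    div_nonneg (by linarith [hmax k]) (by linarith [hmin k, hmax k])
  have hθ₀ : ∀ k, 0 ≤ θ k := fun k => div_nonneg (hmin k) ((hmin k).trans (hmax k))
  have hbound : ∀ n, m ≤ n →
      birkhoffCoeff (fwdProd A m n) ≤ Real.exp (-∑ k ∈ Finset.Icc m n, θ k) := fun n hmn =>
    calc birkhoffCoeff (fwdProd A m n) ≤ ∏ k ∈ Finset.Icc m n, τ k :=
          birkhoffCoeff_le (Finset.prod_nonneg fun k _ => hτ₀ k) <|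
            hilbertLipschitzWith_fwdProd hA
              (fun k => hilbertLipschitzWith_minEntry_maxEntry _ (hA k)) hτ₀ hmn
      _ ≤ ∏ k ∈ Finset.Icc m n, Real.exp (-θ k) :=
          Finset.prod_le_prod (fun k _ => hτ₀ k)
            fun k _ => sub_div_add_le_exp_neg_div (hmin k) (hmax k)
      _ = Real.exp (-∑ k ∈ Finset.Icc m n, θ k) := by
          rw [← Finset.sum_neg_distrib, Real.exp_sum]
  have hlim : Tendsto (fun n => Real.exp (-∑ k ∈ Finset.Icc m n, θ k)) atTop (nhds 0) :=
    Real.tendsto_exp_atBot.comp <| tendsto_neg_atTop_atBot.comp <|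
      tendsto_sum_Icc_atTop_of_not_summable hθ₀ hdiv m
  refine tendsto_of_tendsto_of_tendsto_of_le_of_le' tendsto_const_nhds hlim ?_ ?_
  · filter_upwards [eventually_ge_atTop m] with n hn
    exact birkhoffCoeff_nonneg (fwdProd_pos hA hn)
  · filter_upwards [eventually_ge_atTop m] with n hn
    exact hbound n hn
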